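/- For integers 1 ≤ k ≤ n, x(Q_{n/k}) ≤ n/k, and if k is odd then x(Q_{n/k}) ≤ (n+1)/(k+1). -/

import Mathlib

attribute [local instance] Classical.propDecidable

/-- A cut in a graph: the set of edges leaving some vertex set `W`. -/
def IsCut {V : Type*} (G : SimpleGraph V) (X : Set (Sym2 V)) : Prop :=
  ∃ W : Set V, X = {e | e ∈ G.edgeSet ∧ ∃ a b, e = s(a, b) ∧ a ∈ W ∧ b ∉ W}

/-- An `n/k`-cover: `n` cuts covering every edge at least `k` times. -/
def HasCover {V : Type*} (G : SimpleGraph V) (n k : ℕ) : Prop :=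
  ∃ X : Fin n → Set (Sym2 V), (∀ i, IsCut G (X i)) ∧
    ∀ e ∈ G.edgeSet, k ≤ (Finset.univ.filter fun i => e ∈ X i).card

/-- The fractional cut-covering number `x(G)`. -/
noncomputable def cutCover {V : Type*} (G : SimpleGraph V) : ℝ :=
  sInf { q : ℝ | ∃ n k : ℕ, 0 < k ∧ q = n / k ∧ HasCover G n k }

/-- The graph `Q_{n/k}` on `{0,1}^n`, with edges between vertices at Hamming distance `≥ k`. -/
def cubeGraph (n k : ℕ) : SimpleGraph (Fin n → Bool) :=
  SimpleGraph.fromRel (fun x y => k ≤ hammingDist x y)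

/-!
Coordinate cuts `{x | x i = true}` cover every edge of `Q_{n/k}` once per differing coordinate, so
at least `k` times: an `n/k`-cover. For odd `k`, appending the parity bit turns distance `k` into
`k + 1` and keeps distances `≥ k + 1`, so it is a homomorphism `Q_{n/k} → Q_{(n+1)/(k+1)}`, and
cut covers pull back along homomorphisms.
-/

theorem cutCover_le_of_hasCover {V : Type*} {G : SimpleGraph V} {n k : ℕ} (hk : 0 < k)
    (h : HasCover G n k) : cutCover G ≤ (n : ℝ) / k := by
  refine csInf_le ⟨0, ?_⟩ ⟨n, k, hk, rfl, h⟩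
  rintro q ⟨n', k', -, rfl, -⟩
  positivity

section Cuts

variable {V W : Type*} {G : SimpleGraph V} {H : SimpleGraph W}

def cutOf (G : SimpleGraph V) (S : Set V) : Set (Sym2 V) :=
  {e | e ∈ G.edgeSet ∧ ∃ a b, e = s(a, b) ∧ a ∈ S ∧ b ∉ S}

theorem isCut_cutOf (S : Set V) : IsCut G (cutOf G S) :=
  ⟨S, rfl⟩

theorem mem_cutOf {S : Set V} {a b : V} :
    s(a, b) ∈ cutOf G S ↔ G.Adj a b ∧ Xor (a ∈ S) (b ∈ S) := by
  simp only [cutOf, Set.mem_ofPred_eq, SimpleGraph.mem_edgeSet, Sym2.eq_iff, Xor]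
  constructor
  · rintro ⟨hab, a', b', (⟨rfl, rfl⟩ | ⟨rfl, rfl⟩), ha, hb⟩
    exacts [⟨hab, .inl ⟨ha, hb⟩⟩, ⟨hab, .inr ⟨ha, hb⟩⟩]
  · rintro ⟨hab, ⟨ha, hb⟩ | ⟨hb, ha⟩⟩
    exacts [⟨hab, a, b, .inl ⟨rfl, rfl⟩, ha, hb⟩, ⟨hab, b, a, .inr ⟨rfl, rfl⟩, hb, ha⟩]

theorem mem_cutOf_preimage_iff (f : G →g H) (S : Set W) {a b : V} (hab : G.Adj a b) :
    s(a, b) ∈ cutOf G (f ⁻¹' S) ↔ s(f a, f b) ∈ cutOf H S := by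
  simp only [mem_cutOf, Set.mem_preimage, hab, f.map_adj hab, true_and]

theorem HasCover.comap {n k : ℕ} (f : G →g H) (h : HasCover H n k) : HasCover G n k := by
  obtain ⟨X, hX, hcover⟩ := h
  choose S hS using hX
  refine ⟨fun i => cutOf G (f ⁻¹' S i), fun i => isCut_cutOf _, ?_⟩
  intro e he
  induction e using Sym2.ind with
  | _ a b =>
    rw [SimpleGraph.mem_edgeSet] at he
    convert hcover s(f a, f b) (f.map_adj he) using 2
    refine Finset.filter_congr fun i _ => ?_
    rw [mem_cutOf_preimage_iff f _ he, hS i]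
    rfl

end Cuts

section Cube

variable {n k : ℕ}

theorem cubeGraph_adj {a b : Fin n → Bool} :
    (cubeGraph n k).Adj a b ↔ a ≠ b ∧ k ≤ hammingDist a b := by
  simp [cubeGraph, hammingDist_comm b a]

theorem mem_cutOf_coord {a b : Fin n → Bool} (hab : (cubeGraph n k).Adj a b) (i : Fin n) :
    s(a, b) ∈ cutOf (cubeGraph n k) {x | x i = true} ↔ a i ≠ b i := by
  rw [mem_cutOf]
  cases ha : a i <;> cases hb : b i <;> simp [hab, ha, hb, Xor]

theorem hasCover_cubeGraph (n k : ℕ) : HasCover (cubeGraph n k) n k := by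
  refine ⟨fun i => cutOf (cubeGraph n k) {x | x i = true}, fun i => isCut_cutOf _, ?_⟩
  intro e he
  induction e using Sym2.ind with
  | _ a b =>
    rw [SimpleGraph.mem_edgeSet] at he
    refine (cubeGraph_adj.1 he).2.trans_eq ?_
    exact congrArg Finset.card (Finset.filter_congr fun i _ => (mem_cutOf_coord he i).symm)

def parity (x : Fin n → Bool) : ZMod 2 :=
  ∑ i, ((x i).toNat : ZMod 2)

theorem parity_add_parity (a b : Fin n → Bool) :
    parity a + parity b = (hammingDist a b : ZMod 2) := by
  rw [parity, parity, ← Finset.sum_add_distrib, hammingDist, Finset.card_filter, Nat.cast_sum]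
  refine Finset.sum_congr rfl fun i _ => ?_
  cases a i <;> cases b i <;> rfl

theorem parity_ne_parity_iff {a b : Fin n → Bool} :
    parity a ≠ parity b ↔ Odd (hammingDist a b) := by
  rw [← ZMod.natCast_ne_zero_iff_odd, ← parity_add_parity, ← CharTwo.sub_eq_add, sub_ne_zero]

def appendParity (x : Fin n → Bool) : Fin (n + 1) → Bool :=
  Fin.snoc x (decide (parity x = 1))

theorem hammingDist_snoc {β : Type*} [DecidableEq β] (a b : Fin n → β) (p q : β) :
    hammingDist (Fin.snoc a p : Fin (n + 1) → β) (Fin.snoc b q) =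
      hammingDist a b + if p ≠ q then 1 else 0 := by
  simp only [hammingDist, Finset.card_filter, Fin.sum_univ_castSucc, Fin.snoc_castSucc,
    Fin.snoc_last]

theorem hammingDist_appendParity (a b : Fin n → Bool) :
    hammingDist (appendParity a) (appendParity b) =
      hammingDist a b + if Odd (hammingDist a b) then 1 else 0 := by
  have hbits : ∀ p q : ZMod 2, decide (p = 1) ≠ decide (q = 1) ↔ p ≠ q := by decide
  simp only [appendParity, hammingDist_snoc, hbits, parity_ne_parity_iff]

theorem succ_le_hammingDist_appendParity (hk : Odd k) {a b : Fin n → Bool}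
    (h : k ≤ hammingDist a b) : k + 1 ≤ hammingDist (appendParity a) (appendParity b) := by
  rw [hammingDist_appendParity]
  rcases h.eq_or_lt with rfl | hlt
  · simp [hk]
  · split_ifs <;> omega

def appendParityHom (hk : Odd k) : cubeGraph n k →g cubeGraph (n + 1) (k + 1) where
  toFun := appendParity
  map_rel' {a b} hab := by
    have hdist := succ_le_hammingDist_appendParity hk (cubeGraph_adj.1 hab).2
    exact cubeGraph_adj.2 ⟨hammingDist_pos.1 (by omega), hdist⟩

end Cube

theorem cutCover_cube_le_general (n k : ℕ) (hk : 1 ≤ k) :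
    cutCover (cubeGraph n k) ≤ (n : ℝ) / k ∧
    (Odd k → cutCover (cubeGraph n k) ≤ ((n : ℝ) + 1) / ((k : ℝ) + 1)) := by
  refine ⟨cutCover_le_of_hasCover hk (hasCover_cubeGraph n k), fun hodd => ?_⟩
  have h := cutCover_le_of_hasCover k.succ_pos
    ((hasCover_cubeGraph (n + 1) (k + 1)).comap (appendParityHom hodd))
  exact_mod_cast h

/-- `x(Q_{n/k}) ≤ n/k`; and if `k` is odd then `x(Q_{n/k}) ≤ (n+1)/(k+1)`. -/
theorem cutCover_cube_le (n k : ℕ) (hk : 1 ≤ k) (hkn : k ≤ n) :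
    cutCover (cubeGraph n k) ≤ (n : ℝ) / k ∧
    (Odd k → cutCover (cubeGraph n k) ≤ ((n : ℝ) + 1) / ((k : ℝ) + 1)) :=
  cutCover_cube_le_general n k hk
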